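/- Define a sequence of digraphs G_i as follows: G_1 is the directed 3-cycle, and for i ≥ 2, G_i is obtained from G_{i-1} by adding, for every ordered pair (u, v) of distinct vertices of G_{i-1}, a new vertex x_{uv} together with the two arcs (u, x_{uv}) and (x_{uv}, v). Then for every i ≥ 2, the oriented chromatic number of G_i satisfies χ_o(G_i) ≥ |V(G_{i-1})|. -/

import Mathlib

/-- A digraph on a vertex type `V`: a set of vertices together with an arc
relation whose endpoints lie in the vertex set.  (No loops are allowed in this
paper; this is the hypothesis `Digr.Loopless` below.  Multiple arcs cannot be
represented.) -/
structure Digr (V : Type) where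
  verts : Set V
  Adj : V → V → Prop
  adj_dom : ∀ ⦃u v : V⦄, Adj u v → u ∈ verts ∧ v ∈ verts

namespace Digr

variable {V : Type}

/-- A digraph has no loops. -/
def Loopless (D : Digr V) : Prop := ∀ v, ¬ D.Adj v v

/-- An asymmetrical digraph (an oriented graph): it never contains both arcs
`(u,v)` and `(v,u)`. -/
def Asymmetrical (D : Digr V) : Prop := ∀ u v, D.Adj u v → ¬ D.Adj v u

/-- `H` is a subdigraph of `D`. -/
def IsSubdigraph (H D : Digr V) : Prop :=
  H.verts ⊆ D.verts ∧ ∀ ⦃u v⦄, H.Adj u v → D.Adj u v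

/-- Union of two digraphs. -/
def union (D₁ D₂ : Digr V) : Digr V where
  verts := D₁.verts ∪ D₂.verts
  Adj u v := D₁.Adj u v ∨ D₂.Adj u v
  adj_dom := by
    rintro u v (h | h)
    · exact ⟨Or.inl (D₁.adj_dom h).1, Or.inl (D₁.adj_dom h).2⟩
    · exact ⟨Or.inr (D₂.adj_dom h).1, Or.inr (D₂.adj_dom h).2⟩

/-- A digraph is strong if every vertex can reach every vertex by a directed
walk (equivalently, by a directed path). -/
def IsStrong (D : Digr V) : Prop :=
  ∀ x ∈ D.verts, ∀ y ∈ D.verts, Relation.ReflTransGen D.Adj x y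

/-- `D` is precisely a directed cycle with `n` vertices (`n ≥ 2`). -/
def IsCycleOfLength (D : Digr V) (n : ℕ) : Prop :=
  2 ≤ n ∧ ∃ f : ZMod n → V, Function.Injective f ∧
    D.verts = Set.range f ∧ ∀ u v, (D.Adj u v ↔ ∃ i, u = f i ∧ v = f (i + 1))

/-- `D` is precisely a directed cycle. -/
def IsCycleDigr (D : Digr V) : Prop := ∃ n, D.IsCycleOfLength n

/-- The underlying (undirected) simple graph on the vertex set of `D`. -/
def UG (D : Digr V) : SimpleGraph D.verts where
  Adj u v := u ≠ v ∧ (D.Adj u v ∨ D.Adj v u)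
  symm := ⟨by rintro u v ⟨hne, h⟩; exact ⟨hne.symm, h.symm⟩⟩
  loopless := ⟨by rintro u ⟨hne, _⟩; exact hne rfl⟩

/-- `D` is nonseparable: its underlying graph is connected and deleting any
single vertex leaves it connected (no cut vertex). -/
def IsNonseparable (D : Digr V) : Prop :=
  D.UG.Connected ∧ ∀ v : D.verts, (D.UG.induce {u | u ≠ v}).Connected

/-- The out-neighbourhood `N⁺(v)`. -/
def outNbhd (D : Digr V) (v : V) : Set V := {u | D.Adj v u}

/-- The second out-neighbourhood `N⁺⁺(v) = (⋃ u ∈ N⁺(v), N⁺(u)) \ N⁺(v)`. -/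
def secondOutNbhd (D : Digr V) (v : V) : Set V :=
  {w | ∃ u, D.Adj v u ∧ D.Adj u w} \ D.outNbhd v

end Digr

/-- An independent set of vertices: no arc between two distinct members. -/
def IsIndependent {V : Type} (D : Digr V) (S : Set V) : Prop :=
  ∀ u ∈ S, ∀ v ∈ S, u ≠ v → ¬ D.Adj u v

/-- An absorbent set: every vertex outside it has an out-neighbour inside it. -/
def IsAbsorbent {V : Type} (D : Digr V) (S : Set V) : Prop :=
  ∀ u ∈ D.verts, u ∉ S → ∃ v ∈ S, D.Adj u v

/-- A kernel: an independent absorbent set of vertices. -/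
def IsKernel {V : Type} (D : Digr V) (N : Set V) : Prop :=
  N ⊆ D.verts ∧ IsIndependent D N ∧ IsAbsorbent D N

/-- `D` has a kernel. -/
def HasKernel {V : Type} (D : Digr V) : Prop := ∃ N, IsKernel D N

/-- A quasi-kernel: an independent set such that every outside vertex reaches
it by a directed path of length at most 2. -/
def IsQuasiKernel {V : Type} (D : Digr V) (Q : Set V) : Prop :=
  Q ⊆ D.verts ∧ IsIndependent D Q ∧
    ∀ u ∈ D.verts, u ∉ Q → ∃ v ∈ Q, (D.Adj u v ∨ ∃ w, D.Adj u w ∧ D.Adj w v)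

/-- A finite sequence `x 0, x 1, ..., x len` of vertices. -/
structure VSeq (V : Type) where
  len : ℕ
  x : ℕ → V

namespace VSeq

variable {V : Type}

/-- The digraph consisting of the vertices and consecutive arcs of the
sequence. -/
def toDigr (s : VSeq V) : Digr V where
  verts := s.x '' {i | i ≤ s.len}
  Adj u v := ∃ i < s.len, u = s.x i ∧ v = s.x (i + 1)
  adj_dom := by
    rintro u v ⟨i, hi, rfl, rfl⟩
    exact ⟨⟨i, le_of_lt hi, rfl⟩, ⟨i + 1, hi, rfl⟩⟩

end VSeq

/-- `e` is an ear of `H` in `D`: a directed path (or a directed cycle, when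
the two end vertices coincide) of `D` whose end vertices lie in `H` and whose
internal vertices are pairwise distinct and do not lie in `H`. -/
def IsEarOf {V : Type} (D H : Digr V) (e : VSeq V) : Prop :=
  1 ≤ e.len ∧
  (∀ i < e.len, D.Adj (e.x i) (e.x (i + 1))) ∧
  e.x 0 ∈ H.verts ∧ e.x e.len ∈ H.verts ∧
  (∀ i, 0 < i → i < e.len → e.x i ∉ H.verts) ∧
  (∀ i ≤ e.len, ∀ j ≤ e.len, e.x i = e.x j →
    i = j ∨ (i = 0 ∧ j = e.len) ∨ (i = e.len ∧ j = 0))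

/-- A directed path in `D`, given by its sequence of (distinct) vertices. -/
def Digr.IsPathIn {V : Type} (D : Digr V) (p : VSeq V) : Prop :=
  (∀ i ≤ p.len, p.x i ∈ D.verts) ∧
  (∀ i < p.len, D.Adj (p.x i) (p.x (i + 1))) ∧
  ∀ i ≤ p.len, ∀ j ≤ p.len, p.x i = p.x j → i = j

/-- An ear decomposition `(D_0, D_1, ..., D_k)` of the strong digraph `D`:
`D_0` is a directed cycle, `D_{i+1} = D_i ∪ P_i` for an ear `P_i` of `D_i`
in `D`, each `D_i` is a strong subdigraph of `D`, and `D_k = D`. -/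
structure EarDecomp {V : Type} (D : Digr V) where
  k : ℕ
  Ds : ℕ → Digr V
  ears : ℕ → VSeq V
  base : (Ds 0).IsCycleDigr
  strong : ∀ i ≤ k, (Ds i).IsStrong
  sub : ∀ i ≤ k, (Ds i).IsSubdigraph D
  isEar : ∀ i < k, IsEarOf D (Ds i) (ears i)
  step : ∀ i < k, Ds (i + 1) = (Ds i).union (ears i).toDigr
  top : Ds k = D

/-- `D` belongs to the family `LE_L`: it has an ear decomposition all of whose
ears have length at least `L`. -/
def InLE {V : Type} (D : Digr V) (L : ℕ) : Prop :=
  ∃ E : EarDecomp D, ∀ i < E.k, L ≤ (E.ears i).len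

/-- `T` is a tournament on `Fin n`: exactly one arc between any two distinct
vertices, and no loops. -/
def IsTournament {n : ℕ} (T : Fin n → Fin n → Prop) : Prop :=
  (∀ v, ¬ T v v) ∧ ∀ u v : Fin n, u ≠ v → (T u v ↔ ¬ T v u)

/-- There is a directed walk of length `k` from `u` to `v` in `T`. -/
def HasWalkOfLength {n : ℕ} (T : Fin n → Fin n → Prop) (k : ℕ) (u v : Fin n) :
    Prop :=
  ∃ w : ℕ → Fin n, w 0 = u ∧ w k = v ∧ ∀ m < k, T (w m) (w (m + 1))

/-- The oriented chromatic number of `D` is at most `m`: there is a tournament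
on `m` vertices and a digraph homomorphism of `D` into it. -/
def OrientedChromAtMost {V : Type} (D : Digr V) (m : ℕ) : Prop :=
  ∃ T : Fin m → Fin m → Prop, IsTournament T ∧
    ∃ φ : V → Fin m, ∀ u v, D.Adj u v → T (φ u) (φ v)


/-- The vertex set of the digraph `G_{n+1}` of the recursive construction:
`GV 0` is the vertex set of `G_1` (a directed 3-cycle) and `GV (n+1)` adds a
new vertex `x_{uv}` for every ordered pair of distinct vertices of `GV n`. -/
def GV : ℕ → Type
  | 0 => Fin 3
  | n + 1 => GV n ⊕ {p : GV n × GV n // p.1 ≠ p.2}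

instance GV.finite : ∀ n, Finite (GV n)
  | 0 => inferInstanceAs (Finite (Fin 3))
  | n + 1 =>
    have := GV.finite n
    inferInstanceAs (Finite (GV n ⊕ {p : GV n × GV n // p.1 ≠ p.2}))

/-- The arcs of `G_{n+1}`: `G_1` is the directed 3-cycle, and `G_{n+2}` keeps
all arcs of `G_{n+1}` and adds the arcs `(u, x_{uv})` and `(x_{uv}, v)` for
every ordered pair `(u, v)` of distinct old vertices. -/
def GAdj : (n : ℕ) → GV n → GV n → Prop
  | 0, u, v => (id v : Fin 3) = (id u : Fin 3) + 1
  | n + 1, Sum.inl u, Sum.inl v => GAdj n u v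
  | n + 1, Sum.inl u, Sum.inr p => u = p.val.1
  | n + 1, Sum.inr p, Sum.inl v => v = p.val.2
  | _ + 1, Sum.inr _, Sum.inr _ => False

/-- The digraph `G_{n+1}` of the recursive construction. -/
def Gdigr (n : ℕ) : Digr (GV n) where
  verts := Set.univ
  Adj := GAdj n
  adj_dom := fun _ _ _ => ⟨trivial, trivial⟩

/-- For every `i ≥ 2` (here `i = n + 2`), the oriented
chromatic number of `G_i` is at least the number of vertices of `G_{i-1}`:
any tournament admitting a homomorphism from `G_i` has at least
`|V(G_{i-1})|` vertices. -/
theorem oriented_chromatic_G_lower_bound (n m : ℕ)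
    (h : OrientedChromAtMost (Gdigr (n + 1)) m) :
    Nat.card (GV n) ≤ m := by
  obtain ⟨T, ⟨hirr, hasym⟩, φ, hφ⟩ := h
  have hinj : Function.Injective (fun u : GV n => φ (Sum.inl u)) := by
    intro u v huv
    by_contra hne
    have h1 : T (φ (Sum.inl u)) (φ (Sum.inr ⟨(u, v), hne⟩)) :=
      hφ _ _ (show GAdj (n+1) (Sum.inl u) (Sum.inr ⟨(u,v), hne⟩) from rfl)
    have h2 : T (φ (Sum.inr ⟨(u, v), hne⟩)) (φ (Sum.inl v)) :=
      hφ _ _ (show GAdj (n+1) (Sum.inr ⟨(u,v), hne⟩) (Sum.inl v) from rfl)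
    simp only at huv
    rw [huv] at h1
    rcases eq_or_ne (φ (Sum.inl v)) (φ (Sum.inr ⟨(u, v), hne⟩)) with he | he
    · exact hirr _ (he ▸ h1)
    · exact ((hasym _ _ he).mp h1) h2
  calc Nat.card (GV n) ≤ Nat.card (Fin m) := Nat.card_le_card_of_injective _ hinj
    _ = m := by simp
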